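/- In a bicontinuous poset, the Lawson topology is contained in the interval topology; in particular, for every x the set of elements not above x is open in the interval topology. -/

import Mathlib

open Set

/-- `a` is way below `x`. -/
def wayBelow {α : Type*} [Preorder α] (a x : α) : Prop :=
  ∀ S : Set α, S.Nonempty → DirectedOn (· ≤ ·) S → ∀ d, IsLUB S d → x ≤ d →
    ∃ s ∈ S, a ≤ s

/-- A poset is continuous if every element is the supremum of a directed set
of elements way below it. -/
def ContinuousPoset (α : Type*) [Preorder α] : Prop :=
  ∀ x : α, ∃ S : Set α, S ⊆ {a | wayBelow a x} ∧ S.Nonempty ∧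
    DirectedOn (· ≤ ·) S ∧ IsLUB S x

/-- A basis for a continuous poset. -/
def PosetBasis {α : Type*} [Preorder α] (B : Set α) : Prop :=
  ∀ x : α, ∃ S : Set α, S ⊆ B ∩ {a | wayBelow a x} ∧ S.Nonempty ∧
    DirectedOn (· ≤ ·) S ∧ IsLUB S x

/-- Scott open sets: upper sets inaccessible by directed suprema. -/
def ScottOpen {α : Type*} [Preorder α] (U : Set α) : Prop :=
  IsUpperSet U ∧ ∀ S : Set α, S.Nonempty → DirectedOn (· ≤ ·) S → ∀ d, IsLUB S d →
    d ∈ U → (S ∩ U).Nonempty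

/-- The Scott topology. -/
def scottTop (α : Type*) [Preorder α] : TopologicalSpace α :=
  TopologicalSpace.generateFrom {U | ScottOpen U}

/-- A bicontinuous poset. -/
def Bicontinuous (α : Type*) [Preorder α] : Prop :=
  ContinuousPoset α ∧
  (∀ x y : α, wayBelow x y ↔
    ∀ S : Set α, S.Nonempty → DirectedOn (· ≥ ·) S → ∀ i, IsGLB S i → i ≤ x →
      ∃ s ∈ S, s ≤ y) ∧
  (∀ x : α, DirectedOn (· ≥ ·) {y | wayBelow x y} ∧ IsGLB {y | wayBelow x y} x)

/-- The basic open intervals `(a,b) = {x | a ≪ x ≪ b}`. -/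
def intervalBasis (α : Type*) [Preorder α] : Set (Set α) :=
  {s | ∃ a b : α, s = {x | wayBelow a x ∧ wayBelow x b}}

/-- The interval topology, generated by the sets `(a,b)`. -/
def intervalTop (α : Type*) [Preorder α] : TopologicalSpace α :=
  TopologicalSpace.generateFrom (intervalBasis α)

/-- A globally hyperbolic poset: bicontinuous, with compact closed intervals. -/
def GloballyHyperbolic (α : Type*) [PartialOrder α] : Prop :=
  Bicontinuous α ∧ ∀ a b : α, @IsCompact α (intervalTop α) (Set.Icc a b)

/-- The poset of closed intervals `[a,b]`, `a ≤ b`, under reverse inclusion. -/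
def IX (α : Type*) [PartialOrder α] := {p : α × α // p.1 ≤ p.2}

instance IX.instPartialOrder {α : Type*} [PartialOrder α] : PartialOrder (IX α) where
  le x y := x.1.1 ≤ y.1.1 ∧ y.1.2 ≤ x.1.2
  le_refl x := ⟨le_refl _, le_refl _⟩
  le_trans x y z h1 h2 := ⟨h1.1.trans h2.1, h2.2.trans h1.2⟩
  le_antisymm x y h1 h2 :=
    Subtype.ext (Prod.ext_iff.mpr ⟨le_antisymm h1.1 h2.1, le_antisymm h2.2 h1.2⟩)

section Rel

variable {β : Type*}

/-- Directedness with respect to an arbitrary relation. -/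
def relDirectedOn (r : β → β → Prop) (S : Set β) : Prop :=
  ∀ x ∈ S, ∀ y ∈ S, ∃ z ∈ S, r x z ∧ r y z

/-- Least upper bound with respect to an arbitrary relation. -/
def relIsLUB (r : β → β → Prop) (S : Set β) (d : β) : Prop :=
  (∀ s ∈ S, r s d) ∧ ∀ u, (∀ s ∈ S, r s u) → r d u

/-- The way-below relation with respect to an arbitrary relation. -/
def relWayBelow (r : β → β → Prop) (a x : β) : Prop :=
  ∀ S : Set β, S.Nonempty → relDirectedOn r S → ∀ d, relIsLUB r S d → r x d →
    ∃ s ∈ S, r a s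

/-- An abstract basis: a transitive relation, interpolative from the `-` direction. -/
def AbstractBasis (r : β → β → Prop) : Prop :=
  Transitive r ∧ ∀ (F : Finset β) (x : β), (∀ y ∈ F, r y x) →
    ∃ z, (∀ y ∈ F, r y z) ∧ r z x

/-- Interpolation in the `+` direction. -/
def PlusInterpolative (r : β → β → Prop) : Prop :=
  ∀ (F : Finset β) (x : β), (∀ y ∈ F, r x y) → ∃ z, r x z ∧ (∀ y ∈ F, r z y)

/-- An ideal: a nonempty directed lower set. -/
def IsIdeal (r : β → β → Prop) (I : Set β) : Prop :=
  I.Nonempty ∧ (∀ x y, r x y → y ∈ I → x ∈ I) ∧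
    ∀ x ∈ I, ∀ y ∈ I, ∃ z ∈ I, r x z ∧ r y z

/-- The ideal completion: ideals ordered by inclusion. -/
def IdealCompletion (r : β → β → Prop) := {I : Set β // IsIdeal r I}

instance IdealCompletion.instPartialOrder {β : Type*} (r : β → β → Prop) :
    PartialOrder (IdealCompletion r) where
  le I J := I.1 ⊆ J.1
  le_refl I := subset_rfl
  le_trans I J K h1 h2 := Set.Subset.trans h1 h2
  le_antisymm I J h1 h2 := Subtype.ext (Set.Subset.antisymm h1 h2)

end Rel

/-- The order on maximal elements induced by interval endpoints. -/
def maxLe {α : Type*} (left right : α → α) (a b : α) : Prop :=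
  ∃ x, left x = a ∧ right x = b

/-- An interval poset. -/
structure IntervalPoset (α : Type*) [PartialOrder α] where
  left : α → α
  right : α → α
  left_max : ∀ x, IsMax (left x)
  right_max : ∀ x, IsMax (right x)
  glb : ∀ x, IsGLB {left x, right x} x
  glue : ∀ x y, right x = left y →
    ∃ z, IsGLB {x, y} z ∧ left z = left x ∧ right z = right y
  sub_left : ∀ x p, IsMax p → x ≤ p →
    ∃ z, IsGLB {left x, p} z ∧ left z = left x ∧ right z = p
  sub_right : ∀ x p, IsMax p → x ≤ p →
    ∃ z, IsGLB {p, right x} z ∧ left z = p ∧ right z = right x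

/-- An interval domain. -/
structure IntervalDomain (α : Type*) [PartialOrder α] extends IntervalPoset α where
  dcpo : ∀ S : Set α, S.Nonempty → DirectedOn (· ≤ ·) S → ∃ d, IsLUB S d
  cont : ContinuousPoset α
  ax1 : ∀ x p, IsMax p → wayBelow x p →
    (∀ z, IsGLB {left x, p} z → ∃ u, wayBelow z u) ∧
    (∀ z, IsGLB {p, right x} z → ∃ u, wayBelow z u)
  ax2b : ∀ x : α, (∃ u, wayBelow x u) ↔
    (∀ y, left y = left x → y ≤ x →
      relWayBelow (fun u v => u ≤ v ∧ right u = right y ∧ right v = right y) y (right y))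
  ax2c : ∀ x : α, (∃ u, wayBelow x u) ↔
    (∀ y, right y = right x → y ≤ x →
      relWayBelow (fun u v => u ≤ v ∧ left u = left y ∧ left v = left y) y (left y))
  ax3a : ∀ (p : α) (S : Set α), S.Nonempty → S ⊆ {z | left z = p} →
    DirectedOn (· ≤ ·) S → ∀ u, IsLUB S u →
      left u = p ∧ ∀ (q : α) (T : Set α), T.Nonempty → T ⊆ {z | left z = q} →
        DirectedOn (· ≤ ·) T → ∀ v, IsLUB T v → right '' T = right '' S →
          right u = right v
  ax3b : ∀ (q : α) (S : Set α), S.Nonempty → S ⊆ {z | right z = q} →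
    DirectedOn (· ≤ ·) S → ∀ u, IsLUB S u →
      right u = q ∧ ∀ (p : α) (T : Set α), T.Nonempty → T ⊆ {z | right z = p} →
        DirectedOn (· ≤ ·) T → ∀ v, IsLUB T v → left '' T = left '' S →
          left u = left v
  ax4 : ∀ x : α, @IsCompact α (scottTop α) ({y | x ≤ y} ∩ {y | IsMax y})

/-!
It suffices to fit around each point `y` of the set an interval `(a,b)` contained in it. A lower
endpoint `a ≪ y` comes from continuity, and for `y ∈ ↟x` interpolation gives `x ≤ a ≪ y`, so that
`(a,b) ⊆ ↟x`. For the upper endpoint, `y = inf ↟y` means that each `c ≰ y` satisfies `c ≰ b` for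
some `y ≪ b`; filteredness of `↟y` gives one such `b` for a whole finite `F`, and then `(a,b)`
misses `↑F` because `w ≪ b` implies `w ≤ b`.
-/

open scoped Topology

local infix:50 " ≪ " => wayBelow

section WayBelow

variable {α : Type*} [Preorder α]

lemma wayBelow.le {a b : α} (h : a ≪ b) : a ≤ b := by
  obtain ⟨s, rfl, hs⟩ := h {b} (singleton_nonempty b) (directedOn_singleton b) b
    isLUB_singleton le_rfl
  exact hs

lemma wayBelow_of_le_of_wayBelow {x a b : α} (hxa : x ≤ a) (h : a ≪ b) : x ≪ b :=
  fun S hS hd d hd' hbd =>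
  let ⟨s, hs, has⟩ := h S hS hd d hd' hbd
  ⟨s, hs, hxa.trans has⟩

lemma ContinuousPoset.exists_wayBelow (hc : ContinuousPoset α) (y : α) : ∃ a, a ≪ y :=
  let ⟨_, hS, ⟨s, hs⟩, _⟩ := hc y
  ⟨s, hS hs⟩

lemma ContinuousPoset.exists_le_wayBelow (hc : ContinuousPoset α) {x y : α} (h : x ≪ y) :
    ∃ a, x ≤ a ∧ a ≪ y := by
  obtain ⟨S, hS, hne, hdir, hlub⟩ := hc y
  obtain ⟨s, hs, hxs⟩ := h S hne hdir y hlub le_rfl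
  exact ⟨s, hxs, hS hs⟩

end WayBelow

section Bicontinuous

variable {α : Type*} [Preorder α]

/-- If nothing were way above `y`, then `y` would be the infimum of `∅`, i.e. a top element,
and the dual characterisation of `≪` would give `y ≪ y`. -/
lemma Bicontinuous.exists_wayBelow (h : Bicontinuous α) (y : α) : ∃ b, y ≪ b := by
  by_contra! hno
  have hempty : {b | y ≪ b} = ∅ := eq_empty_iff_forall_notMem.2 hno
  have htop : ∀ z : α, z ≤ y := fun z => (hempty ▸ (h.2.2 y).2).2 (by simp)
  exact hno y <| (h.2.1 y y).2 fun S ⟨s, hs⟩ _ _ _ _ => ⟨s, hs, htop s⟩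

lemma Bicontinuous.exists_wayBelow_not_le (h : Bicontinuous α) {x y : α} (hxy : ¬x ≤ y) :
    ∃ b, y ≪ b ∧ ¬x ≤ b := by
  by_contra! hno
  exact hxy ((h.2.2 y).2.2 hno)

lemma Bicontinuous.exists_wayBelow_forall_not_le (h : Bicontinuous α) (y : α) (F : Finset α)
    (hF : ∀ a ∈ F, ¬a ≤ y) : ∃ b, y ≪ b ∧ ∀ a ∈ F, ¬a ≤ b := by
  classical
  induction F using Finset.induction_on with
  | empty => simpa using h.exists_wayBelow y
  | insert a F _ ih =>
    rw [Finset.forall_mem_insert] at hF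
    obtain ⟨b, hyb, hbF⟩ := ih hF.2
    obtain ⟨c, hyc, hac⟩ := h.exists_wayBelow_not_le hF.1
    obtain ⟨d, hyd, hdb, hdc⟩ := (h.2.2 y).1 b hyb c hyc
    refine ⟨d, hyd, Finset.forall_mem_insert _ _ _ |>.2 ⟨?_, ?_⟩⟩
    · exact fun had => hac (had.trans hdc)
    · exact fun a' ha' had => hbF a' ha' (had.trans hdb)

end Bicontinuous

section IntervalTopology

variable {α : Type*} [Preorder α]

lemma isOpen_intervalTop_of_forall {U : Set α}
    (hU : ∀ y ∈ U, ∃ a b, a ≪ y ∧ y ≪ b ∧ {w | a ≪ w ∧ w ≪ b} ⊆ U) :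
    IsOpen[intervalTop α] U := by
  refine @isOpen_iff_forall_mem_open α (intervalTop α) U |>.2 fun y hy => ?_
  obtain ⟨a, b, hay, hyb, hsub⟩ := hU y hy
  exact ⟨_, hsub, TopologicalSpace.isOpen_generateFrom_of_mem ⟨a, b, rfl⟩, hay, hyb⟩

lemma Bicontinuous.isOpen_setOf_wayBelow (h : Bicontinuous α) (x : α) :
    IsOpen[intervalTop α] {y | x ≪ y} := by
  refine isOpen_intervalTop_of_forall fun y hxy => ?_
  obtain ⟨a, hxa, hay⟩ := h.1.exists_le_wayBelow hxy
  obtain ⟨b, hyb⟩ := h.exists_wayBelow y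
  exact ⟨a, b, hay, hyb, fun w hw => wayBelow_of_le_of_wayBelow hxa hw.1⟩

lemma Bicontinuous.isOpen_setOf_forall_not_le (h : Bicontinuous α) (F : Finset α) :
    IsOpen[intervalTop α] {y | ∀ a ∈ F, ¬a ≤ y} := by
  refine isOpen_intervalTop_of_forall fun y hy => ?_
  obtain ⟨a, hay⟩ := h.1.exists_wayBelow y
  obtain ⟨b, hyb, hbF⟩ := h.exists_wayBelow_forall_not_le y F hy
  exact ⟨a, b, hay, hyb, fun w hw c hc hcw => hbF c hc (hcw.trans hw.2.le)⟩

end IntervalTopology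

/-- in a bicontinuous poset the Lawson topology is contained in the
interval topology; in particular each set `{y | ¬ x ≤ y}` is open in the interval
topology. -/
theorem lawson_subset_interval {α : Type*} [PartialOrder α] (h : Bicontinuous α) :
    letI : TopologicalSpace α := intervalTop α
    (∀ x : α, IsOpen {y : α | ¬ x ≤ y}) ∧
    (∀ (x : α) (F : Finset α),
      IsOpen ({y : α | wayBelow x y} \ {y : α | ∃ a ∈ F, a ≤ y})) := by
  refine ⟨fun x => by simpa using h.isOpen_setOf_forall_not_le {x}, fun x F => ?_⟩
  convert (h.isOpen_setOf_wayBelow x).inter (h.isOpen_setOf_forall_not_le F) using 1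
  ext y
  simp
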